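/- The log-Gamma function's convexity implies: for all x > 0, √(x − 1/2) ≤ Γ(x + 1/2)/Γ(x) ≤ √x. -/
import Mathlib

open Real

lemma gautschi_upper (y : ℝ) (hy : 0 < y) :
    Real.Gamma (y + 1 / 2) ≤ Real.sqrt y * Real.Gamma y := by
  have h := Real.Gamma_mul_add_mul_le_rpow_Gamma_mul_rpow_Gamma (s := y) (t := y + 1)
    (a := 1/2) (b := 1/2) hy (by linarith) (by norm_num) (by norm_num) (by norm_num)
  have h1 : (1/2 : ℝ) * y + 1/2 * (y + 1) = y + 1/2 := by ring
  rw [h1, Real.Gamma_add_one hy.ne'] at h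
  have hg : 0 ≤ Real.Gamma y := (Real.Gamma_pos_of_pos hy).le
  rw [Real.mul_rpow hy.le hg] at h
  calc Real.Gamma (y + 1/2) ≤ Real.Gamma y ^ (1/2:ℝ) * (y ^ (1/2:ℝ) * Real.Gamma y ^ (1/2:ℝ)) := h
    _ = Real.sqrt y * Real.Gamma y := by
        rw [Real.sqrt_eq_rpow]
        rw [show Real.Gamma y ^ (1/2:ℝ) * (y ^ (1/2:ℝ) * Real.Gamma y ^ (1/2:ℝ))
          = y ^ (1/2:ℝ) * (Real.Gamma y ^ (1/2:ℝ) * Real.Gamma y ^ (1/2:ℝ)) by ring,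
          ← Real.rpow_add' hg (by norm_num)]
        norm_num

theorem stmt3 (x : ℝ) (hx : 0 < x) :
    Real.sqrt (x - 1 / 2) ≤ Real.Gamma (x + 1 / 2) / Real.Gamma x ∧
      Real.Gamma (x + 1 / 2) / Real.Gamma x ≤ Real.sqrt x := by
  have hgx : 0 < Real.Gamma x := Real.Gamma_pos_of_pos hx
  have hgx2 : 0 < Real.Gamma (x + 1/2) := Real.Gamma_pos_of_pos (by linarith)
  constructor
  · rcases le_or_gt x (1/2) with h | h
    · rw [Real.sqrt_eq_zero'.mpr (by linarith)]
      positivity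
    · have hy : 0 < x - 1/2 := by linarith
      have h1 := gautschi_upper (x - 1/2) hy
      rw [show x - 1/2 + 1/2 = x by ring] at h1
      have h2 : Real.Gamma (x + 1/2) = (x - 1/2) * Real.Gamma (x - 1/2) := by
        rw [← Real.Gamma_add_one hy.ne']; ring_nf
      rw [le_div_iff₀ hgx]
      have hs : Real.sqrt (x - 1/2) * Real.sqrt (x - 1/2) = x - 1/2 :=
        Real.mul_self_sqrt hy.le
      nlinarith [Real.sqrt_nonneg (x - 1/2), Real.Gamma_pos_of_pos hy]
  · rw [div_le_iff₀ hgx]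
    exact gautschi_upper x hx
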